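/- arXiv:1108.5245 — 5 statements merged into one kernel-verified Lean document; each statement's English description precedes it below -/
import Mathlib

section
/- Let P be a finite poset and let (p_1, p_2, …, p_n) be a linear extension of P (an enumeration of the elements of P such that p_i < p_j in P implies i < j). Then for every order ideal I ∈ J(P), the Fon-Der-Flaass action satisfies Ψ(I) = t_{p_1}(t_{p_2}(⋯ t_{p_n}(I)⋯)), i.e. Ψ equals the composition of the toggles t_{p_1} t_{p_2} ⋯ t_{p_n} with t_{p_n} applied first. -/
open Classical

namespace FDF

variable {α : Type*} [PartialOrder α] [DecidableEq α]

/-- `I` is an order ideal (down-set) of the poset `α`. -/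
def IsIdeal (I : Finset α) : Prop := ∀ ⦃x y : α⦄, y ∈ I → x ≤ y → x ∈ I

/-- The toggle `t_p`: remove `p` if it is a maximal element of `I`; insert `p` if
`p ∉ I` and `I ∪ {p}` is an order ideal; otherwise do nothing. -/
noncomputable def toggle (p : α) (I : Finset α) : Finset α :=
  if p ∈ I ∧ ∀ y ∈ I, ¬ p < y then I.erase p
  else if p ∉ I ∧ IsIdeal (insert p I) then insert p I
  else I

variable [Fintype α]

/-- The Fon-Der-Flaass action on finsets: `fdf I` is the set of elements lying below
some minimal element of the complement of `I`, i.e. the unique order ideal whose maximal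
elements are the minimal elements of the complement of `I`. -/
noncomputable def fdf (I : Finset α) : Finset α :=
  Finset.univ.filter (fun x => ∃ y, y ∉ I ∧ (∀ z, z < y → z ∈ I) ∧ x ≤ y)

end FDF

/-!
Toggling along a linear extension from the top down, the elements already toggled always
form an upper set `U`, and the current ideal agrees with `Ψ(I)` on `U` and with `I` off `U`.
Toggling the next element `p`, which is maximal outside `U`, adds `p` to `U`: according to
whether `p` lies in `I` and in `Ψ(I)`, the toggle keeps, removes or inserts `p`, exactly as
`Ψ(I)` demands, because the elements above `p` already carry their `Ψ(I)`-status and those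
below it their `I`-status.
-/

namespace FDF

section Toggle

variable {α : Type*} [PartialOrder α] [DecidableEq α] {p : α} {I : Finset α}

theorem toggle_eq_erase (hp : p ∈ I) (hmax : ∀ y ∈ I, ¬ p < y) : toggle p I = I.erase p := by
  rw [toggle, if_pos ⟨hp, hmax⟩]

theorem toggle_eq_insert (hp : p ∉ I) (hI : IsIdeal (insert p I)) :
    toggle p I = insert p I := by
  rw [toggle, if_neg fun h => hp h.1, if_pos ⟨hp, hI⟩]

theorem toggle_eq_self_of_mem_of_lt {y : α} (hp : p ∈ I) (hy : y ∈ I) (hpy : p < y) :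
    toggle p I = I := by
  rw [toggle, if_neg fun h => h.2 y hy hpy, if_neg fun h => h.1 hp]

theorem toggle_eq_self_of_notMem_of_lt {z : α} (hp : p ∉ I) (hz : z ∉ I) (hzp : z < p) :
    toggle p I = I := by
  have hins : ¬ IsIdeal (insert p I) := fun h =>
    (Finset.mem_insert.1 (h (Finset.mem_insert_self p I) hzp.le)).elim hzp.ne hz
  rw [toggle, if_neg fun h => hp h.1, if_neg fun h => hins h.2]

end Toggle

section FonDerFlaass

variable {α : Type*} [PartialOrder α] [DecidableEq α] [Fintype α] {I U : Finset α} {p x y : α}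

theorem mem_fdf : x ∈ fdf I ↔ ∃ y, y ∉ I ∧ (∀ z, z < y → z ∈ I) ∧ x ≤ y := by
  simp [fdf]

theorem fdf_isIdeal : IsIdeal (fdf I) := fun _ _ hy hxy =>
  let ⟨m, hm, hmin, hym⟩ := mem_fdf.1 hy
  mem_fdf.2 ⟨m, hm, hmin, hxy.trans hym⟩

theorem mem_of_lt_mem_fdf (hxy : x < y) (hy : y ∈ fdf I) : x ∈ I :=
  let ⟨_, _, hmin, hym⟩ := mem_fdf.1 hy
  hmin x (hxy.trans_le hym)

theorem mem_fdf_of_notMem (hx : x ∉ I) (hmin : ∀ z, z < x → z ∈ I) : x ∈ fdf I :=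
  mem_fdf.2 ⟨x, hx, hmin, le_rfl⟩

theorem exists_lt_mem_fdf_of_mem (hx : x ∈ I) (hxI : x ∈ fdf I) : ∃ y ∈ fdf I, x < y := by
  obtain ⟨m, hm, hmin, hxm⟩ := mem_fdf.1 hxI
  exact ⟨m, mem_fdf_of_notMem hm hmin, hxm.lt_of_ne fun h => hm (h ▸ hx)⟩

/-- The ideal reached from `I` once the elements of the upper set `U` have been toggled. -/
noncomputable def partialFdf (U I : Finset α) : Finset α := fdf I ∩ U ∪ I \ U

theorem mem_partialFdf :
    x ∈ partialFdf U I ↔ x ∈ U ∧ x ∈ fdf I ∨ x ∉ U ∧ x ∈ I := by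
  simp only [partialFdf, Finset.mem_union, Finset.mem_inter, Finset.mem_sdiff]
  tauto

theorem partialFdf_empty : partialFdf ∅ I = I := by
  ext; simp [mem_partialFdf]

theorem partialFdf_univ : partialFdf Finset.univ I = fdf I := by
  ext; simp [mem_partialFdf]

theorem partialFdf_insert_of_mem_fdf_iff (hpU : p ∉ U) (hp : p ∈ fdf I ↔ p ∈ I) :
    partialFdf (insert p U) I = partialFdf U I := by
  ext x
  by_cases hxp : x = p
  · subst hxp; simp [mem_partialFdf, hpU, hp]
  · simp [mem_partialFdf, hxp]

theorem partialFdf_insert_of_notMem_fdf (hp : p ∉ fdf I) :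
    partialFdf (insert p U) I = (partialFdf U I).erase p := by
  ext x
  by_cases hxp : x = p
  · subst hxp; simp [mem_partialFdf, hp]
  · simp [mem_partialFdf, hxp]

theorem partialFdf_insert_of_mem_fdf (hp : p ∈ fdf I) :
    partialFdf (insert p U) I = insert p (partialFdf U I) := by
  ext x
  by_cases hxp : x = p
  · subst hxp; simp [mem_partialFdf, hp]
  · simp [mem_partialFdf, hxp]

theorem isIdeal_partialFdf (hI : IsIdeal I) (hU : IsUpperSet (U : Set α)) :
    IsIdeal (partialFdf U I) := by
  intro x y hy hxy
  rw [mem_partialFdf] at hy ⊢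
  rcases hy with ⟨hyU, hyJ⟩ | ⟨hyU, hyI⟩
  · by_cases hxU : x ∈ U
    · exact .inl ⟨hxU, fdf_isIdeal hyJ hxy⟩
    · have hxy' : x < y := hxy.lt_of_ne fun h => hxU (h ▸ hyU)
      exact .inr ⟨hxU, mem_of_lt_mem_fdf hxy' hyJ⟩
  · have hxU : x ∉ U := fun hxU => hyU (hU hxy hxU)
    exact .inr ⟨hxU, hI hyI hxy⟩

theorem toggle_partialFdf (hI : IsIdeal I)
    (hU : IsUpperSet (U : Set α)) (hpU : p ∉ U) (hgt : ∀ y, p < y → y ∈ U) :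
    toggle p (partialFdf U I) = partialFdf (insert p U) I := by
  have hp : p ∈ partialFdf U I ↔ p ∈ I := by simp [mem_partialFdf, hpU]
  by_cases hpI : p ∈ I <;> by_cases hpJ : p ∈ fdf I
  · obtain ⟨y, hyJ, hpy⟩ := exists_lt_mem_fdf_of_mem hpI hpJ
    have hy : y ∈ partialFdf U I := mem_partialFdf.2 (.inl ⟨hgt y hpy, hyJ⟩)
    rw [toggle_eq_self_of_mem_of_lt (hp.2 hpI) hy hpy,
      partialFdf_insert_of_mem_fdf_iff hpU (iff_of_true hpJ hpI)]
  · have hmax : ∀ y ∈ partialFdf U I, ¬ p < y := fun y hy hpy =>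
      hpJ (fdf_isIdeal ((mem_partialFdf.1 hy).resolve_right fun h => h.1 (hgt y hpy)).2 hpy.le)
    rw [toggle_eq_erase (hp.2 hpI) hmax, partialFdf_insert_of_notMem_fdf hpJ]
  · have hU' : IsUpperSet ((insert p U : Finset α) : Set α) := by
      intro x y hxy hx
      rw [Finset.coe_insert] at hx ⊢
      rcases hx with rfl | hx
      · exact hxy.eq_or_lt.imp Eq.symm (hgt y)
      · exact .inr (hU hxy hx)
    have hideal := isIdeal_partialFdf hI hU'
    rw [partialFdf_insert_of_mem_fdf hpJ] at hideal ⊢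
    exact toggle_eq_insert (mt hp.1 hpI) hideal
  · obtain ⟨z, hzp, hzI⟩ : ∃ z < p, z ∉ I := by
      by_contra! h
      exact hpJ (mem_fdf_of_notMem hpI h)
    have hzU : z ∉ U := fun hzU => hpU (hU hzp.le hzU)
    have hz : z ∉ partialFdf U I := by simp [mem_partialFdf, hzI, hzU]
    rw [toggle_eq_self_of_notMem_of_lt (mt hp.1 hpI) hz hzp,
      partialFdf_insert_of_mem_fdf_iff hpU (iff_of_false hpJ hpI)]

theorem foldr_toggle_eq_partialFdf (hI : IsIdeal I) {l : List α}
    (hl : l.Pairwise fun a b => ¬ b ≤ a) (hup : IsUpperSet {x | x ∈ l}) :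
    l.foldr toggle I = partialFdf l.toFinset I := by
  induction l with
  | nil => exact partialFdf_empty.symm
  | cons p l ih =>
    rw [List.pairwise_cons] at hl
    have hpl : p ∉ l.toFinset := fun hp => hl.1 p (List.mem_toFinset.1 hp) le_rfl
    have hup' : IsUpperSet {x | x ∈ l} := fun x y hxy hx =>
      ((List.mem_cons.1 (hup hxy (List.mem_cons_of_mem p hx))).resolve_left
        fun hyp => hl.1 x hx (hyp ▸ hxy))
    have hgt : ∀ y, p < y → y ∈ l.toFinset := fun y hpy =>
      List.mem_toFinset.2 ((List.mem_cons.1 (hup hpy.le List.mem_cons_self)).resolve_left hpy.ne')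
    rw [List.foldr_cons, ih hl.2 hup', List.toFinset_cons,
      toggle_partialFdf hI (by simpa using hup') hpl hgt]

end FonDerFlaass

end FDF

/-- If `(p_1, …, p_n)` is a linear extension of a finite poset `P`, then for every order
ideal `I` of `P`, the Fon-Der-Flaass action satisfies
`Ψ(I) = t_{p_1}(t_{p_2}(⋯ t_{p_n}(I)⋯))`, with `t_{p_n}` applied first. -/
theorem fdf_eq_foldr_toggle_of_linearExtension
    {P : Type*} [PartialOrder P] [Fintype P] [DecidableEq P]
    (e : Fin (Fintype.card P) ≃ P)
    (he : ∀ i j : Fin (Fintype.card P), e i < e j → i < j)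
    (I : Finset P) (hI : FDF.IsIdeal I) :
    FDF.fdf I = (List.ofFn (fun i => e i)).foldr FDF.toggle I := by
  have hl : (List.ofFn fun i => e i).Pairwise fun a b => ¬ b ≤ a :=
    List.pairwise_ofFn.2 fun i j hij hji =>
      hji.eq_or_lt.elim (fun h => hij.ne' (e.injective h)) fun h => hij.not_gt (he j i h)
  have hall : ∀ x, x ∈ List.ofFn fun i => e i := fun x =>
    (List.mem_ofFn' _ x).2 (e.surjective x)
  have huniv : (List.ofFn fun i => e i).toFinset = Finset.univ :=
    Finset.eq_univ_of_forall fun x => List.mem_toFinset.2 (hall x)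
  rw [FDF.foldr_toggle_eq_partialFdf hI hl fun _ y _ _ => hall y, huniv, FDF.partialFdf_univ]
end

section
/- Let (W, S) be a Coxeter system, let w ∈ W be fully commutative with reduced word s_{i_1} s_{i_2} ⋯ s_{i_ℓ}, and let P_w be the associated heap on {1, …, ℓ}. Then the set of reduced words for w is exactly the set of words s_{i_{π(1)}} s_{i_{π(2)}} ⋯ s_{i_{π(ℓ)}} as π ranges over the reverse linear extensions of P_w (i.e., the bijections π : {1,…,ℓ} → {1,…,ℓ} such that π(a) < π(b) in the heap order implies a > b). -/
namespace Heap

variable {B : Type*} {W : Type*} [Group W] {M : CoxeterMatrix B}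

/-- `l₂` is obtained from `l₁` by swapping one adjacent pair of commuting letters. -/
def CommSwap (cs : CoxeterSystem M W) (l₁ l₂ : List B) : Prop :=
  ∃ (a b : List B) (x y : B), Commute (cs.simple x) (cs.simple y) ∧
    l₁ = a ++ x :: y :: b ∧ l₂ = a ++ y :: x :: b

/-- `l` is a reduced word for `w`. -/
def IsReducedWordFor (cs : CoxeterSystem M W) (w : W) (l : List B) : Prop :=
  cs.wordProd l = w ∧ cs.IsReduced l

/-- `w` is fully commutative: any two reduced words for `w` are related by a sequence of
swaps of adjacent commuting letters. -/
def FullyCommutative (cs : CoxeterSystem M W) (w : W) : Prop :=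
  ∀ l₁ l₂ : List B, IsReducedWordFor cs w l₁ → IsReducedWordFor cs w l₂ →
    Relation.ReflTransGen (CommSwap cs) l₁ l₂

/-- The heap (strict) order on positions of the word `ω`: the transitive closure of the
relations `j' <ₕ j` for all integers `j < j'` such that the letters in positions `j`, `j'`
do not commute. -/
def heapLT (cs : CoxeterSystem M W) (ω : List B) : Fin ω.length → Fin ω.length → Prop :=
  Relation.TransGen (fun a b : Fin ω.length =>
    b.val < a.val ∧ ¬ Commute (cs.simple (ω.get a)) (cs.simple (ω.get b)))

end Heap

/-! A swap of two adjacent commuting letters in the word `ω ∘ π` is the passage from `π` to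
`π ∘ (k k+1)`, and it keeps `π` a reverse linear extension: `π k` and `π (k+1)` are
incomparable in the heap, as their letters commute and an element strictly between them in the
heap would have to occur strictly between positions `k` and `k+1` of the new word. Full
commutativity connects every reduced word to `ω` by such swaps. Conversely, at a descent of a
reverse linear extension the two letters must commute, so bubble-sorting `π` to the identity
(each step lowers `π` lexicographically) only performs commuting swaps, which do not change the
product; the length is then that of `ω`. -/

namespace List

variable {α : Type*} {n : ℕ}

theorem exists_ofFn_eq_append_cons_cons (f : Fin n → α) {k k' : Fin n}
    (hk' : k'.val = k.val + 1) :
    ∃ A C : List α, A.length = k.val ∧ ofFn f = A ++ f k :: f k' :: C := by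
  obtain ⟨k', _⟩ := k'
  subst hk'
  refine ⟨(ofFn f).take k, (ofFn f).drop (k + 2), by simp, ?_⟩
  conv_lhs => rw [← take_append_drop k (ofFn f), drop_eq_getElem_cons (by simp),
    drop_eq_getElem_cons (by simpa)]
  simp

theorem exists_apply_eq_of_ofFn_eq_append {f : Fin n → α} {A C : List α} {x y : α}
    (hf : ofFn f = A ++ x :: y :: C) :
    ∃ k k' : Fin n, k.val = A.length ∧ k'.val = k.val + 1 ∧ f k = x ∧ f k' = y := by
  have hlen : A.length + 1 < n := by
    have := congrArg length hf
    simp only [length_ofFn, length_append, length_cons] at this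
    omega
  have hget (i : ℕ) (hi : i < n) :
      f ⟨i, hi⟩ = (A ++ x :: y :: C)[i]'(by simp [← hf, hi]) := by
    rw [← getElem_of_eq hf (by simpa), List.getElem_ofFn]
  refine ⟨⟨A.length, by omega⟩, ⟨A.length + 1, hlen⟩, rfl, rfl, ?_, ?_⟩ <;> simp [hget]

theorem ofFn_comp_swap_of_eq_append {f : Fin n → α} {k k' : Fin n} {A C : List α}
    (hk : k.val = A.length) (hk' : k'.val = k.val + 1) (hf : ofFn f = A ++ f k :: f k' :: C) :
    ofFn (f ∘ Equiv.swap k k') = A ++ f k' :: f k :: C := by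
  apply List.ext_getElem
  · simpa using congrArg length hf
  intro i h₁ h₂
  rw [List.getElem_ofFn, Function.comp_apply]
  by_cases hik : i = k
  · rw [show (⟨i, _⟩ : Fin n) = k from Fin.ext hik, Equiv.swap_apply_left]
    simp [hk, hik]
  by_cases hik' : i = k'
  · rw [show (⟨i, _⟩ : Fin n) = k' from Fin.ext hik', Equiv.swap_apply_right]
    simp [hk, hik', hk']
  have hfi : f ⟨i, by simpa using h₁⟩ =
      (A ++ f k :: f k' :: C)[i]'(by simpa [← hf] using h₁) := by
    simp [← hf]
  rw [Equiv.swap_apply_of_ne_of_ne (Fin.ne_of_val_ne hik) (Fin.ne_of_val_ne hik'), hfi]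
  rcases Nat.lt_or_gt_of_ne (hk ▸ hik) with hi | hi
  · simp [getElem_append_left hi]
  · obtain ⟨j, rfl⟩ : ∃ j, i = A.length + 2 + j := ⟨i - (A.length + 2), by omega⟩
    simp [getElem_append_right, Nat.add_assoc, Nat.add_comm 2 j]

end List

theorem Fin.lt_of_swap_lt_swap {n : ℕ} {k k' a b : Fin n} (hk' : k'.val = k.val + 1)
    (hab : ¬(a = k ∧ b = k')) (h : Equiv.swap k k' b < Equiv.swap k k' a) : b < a := by
  simp only [Equiv.swap_apply_def] at h
  rw [Fin.ext_iff, Fin.ext_iff] at hab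
  rw [Fin.lt_def] at h ⊢
  split_ifs at h <;> simp only [Fin.ext_iff] at * <;> omega

theorem Equiv.Perm.exists_succ_lt_of_ne_one {n : ℕ} {π : Equiv.Perm (Fin n)} (hπ : π ≠ 1) :
    ∃ k k' : Fin n, k'.val = k.val + 1 ∧ π k' < π k := by
  contrapose! hπ
  cases n with
  | zero => exact Subsingleton.elim _ _
  | succ n =>
    have hmono : StrictMono π := Fin.strictMono_iff_lt_succ.2 fun i =>
      (hπ _ _ rfl).lt_of_ne (π.injective.ne Fin.castSucc_lt_succ.ne)
    exact Equiv.ext (congrFun hmono.eq_id)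

theorem Equiv.Perm.toLex_swap_trans_lt {n : ℕ} {π : Equiv.Perm (Fin n)} {k k' : Fin n}
    (hk' : k'.val = k.val + 1) (hd : π k' < π k) :
    toLex ⇑((Equiv.swap k k').trans π) < toLex ⇑π := by
  have hkk' : k < k' := Fin.lt_def.2 (by omega)
  refine ⟨k, fun j hj => ?_, by simpa⟩
  simp [Equiv.swap_apply_of_ne_of_ne hj.ne (hj.trans hkk').ne]

namespace Heap

variable {B W : Type*} [Group W] {M : CoxeterMatrix B} {cs : CoxeterSystem M W}

theorem CommSwap.wordProd_eq {l₁ l₂ : List B} (h : CommSwap cs l₁ l₂) :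
    cs.wordProd l₁ = cs.wordProd l₂ := by
  obtain ⟨a, b, x, y, hc, rfl, rfl⟩ := h
  simp only [CoxeterSystem.wordProd_append, CoxeterSystem.wordProd_cons, hc.left_comm]

theorem commSwap_ofFn_comp_swap {n : ℕ} (f : Fin n → B) {k k' : Fin n}
    (hk' : k'.val = k.val + 1) (hc : Commute (cs.simple (f k)) (cs.simple (f k'))) :
    CommSwap cs (List.ofFn f) (List.ofFn (f ∘ Equiv.swap k k')) := by
  obtain ⟨A, C, hA, hf⟩ := List.exists_ofFn_eq_append_cons_cons f hk'
  exact ⟨A, C, _, _, hc, hf, List.ofFn_comp_swap_of_eq_append hA.symm hk' hf⟩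

variable {ω : List B}

theorem lt_of_heapLT {a b : Fin ω.length} (h : heapLT cs ω a b) : b < a :=
  h.trans_induction_on (fun h => h.1) (fun _ _ hab hbc => hbc.trans hab)

def IsReverseLinearExtension (cs : CoxeterSystem M W) (ω : List B)
    (π : Equiv.Perm (Fin ω.length)) : Prop :=
  ∀ a b, heapLT cs ω (π a) (π b) → b < a

theorem isReverseLinearExtension_one : IsReverseLinearExtension cs ω 1 :=
  fun _ _ => lt_of_heapLT

namespace IsReverseLinearExtension

variable {π : Equiv.Perm (Fin ω.length)} {k k' : Fin ω.length}

theorem not_heapLT_of_commute (hπ : IsReverseLinearExtension cs ω π) (hk' : k'.val = k.val + 1)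
    (hc : Commute (cs.simple (ω.get (π k))) (cs.simple (ω.get (π k')))) :
    ¬ heapLT cs ω (π k') (π k) := by
  intro h
  unfold heapLT at h
  cases h with
  | single hstep => exact hstep.2 hc.symm
  | @tail c _ hlt hstep =>
    have h₁ := hπ k' (π.symm c) (by rw [π.apply_symm_apply]; exact hlt)
    have h₂ := hπ (π.symm c) k (by rw [π.apply_symm_apply]; exact .single hstep)
    rw [Fin.lt_def] at h₁ h₂
    omega

theorem commute_of_lt (hπ : IsReverseLinearExtension cs ω π) (hk' : k'.val = k.val + 1)
    (hd : π k' < π k) : Commute (cs.simple (ω.get (π k))) (cs.simple (ω.get (π k'))) := by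
  by_contra hnc
  have := hπ k k' (.single ⟨hd, hnc⟩)
  rw [Fin.lt_def] at this
  omega

theorem swap_trans (hπ : IsReverseLinearExtension cs ω π) (hk' : k'.val = k.val + 1)
    (hc : Commute (cs.simple (ω.get (π k))) (cs.simple (ω.get (π k')))) :
    IsReverseLinearExtension cs ω ((Equiv.swap k k').trans π) := by
  intro a b h
  by_cases hab : a = k ∧ b = k'
  · obtain ⟨rfl, rfl⟩ := hab
    simp only [Equiv.trans_apply, Equiv.swap_apply_left, Equiv.swap_apply_right] at h
    exact absurd h (hπ.not_heapLT_of_commute hk' hc)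
  · exact Fin.lt_of_swap_lt_swap hk' hab (hπ _ _ h)

theorem wordProd_ofFn (hπ : IsReverseLinearExtension cs ω π) :
    cs.wordProd (List.ofFn fun a => ω.get (π a)) = cs.wordProd ω := by
  induction π using
    (InvImage.wf (fun π : Equiv.Perm (Fin ω.length) => toLex ⇑π) wellFounded_lt).induction with
  | _ π ih =>
  by_cases h1 : π = 1
  · subst h1
    simp
  obtain ⟨k, k', hk', hd⟩ := Equiv.Perm.exists_succ_lt_of_ne_one h1
  have hc := hπ.commute_of_lt hk' hd
  rw [← ih _ (Equiv.Perm.toLex_swap_trans_lt hk' hd) (hπ.swap_trans hk' hc)]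
  exact (commSwap_ofFn_comp_swap (fun a => ω.get (π a)) hk' hc).wordProd_eq

end IsReverseLinearExtension

theorem exists_isReverseLinearExtension_of_reflTransGen {l : List B}
    (h : Relation.ReflTransGen (CommSwap cs) ω l) :
    ∃ π, IsReverseLinearExtension cs ω π ∧ l = List.ofFn fun a => ω.get (π a) := by
  induction h with
  | refl => exact ⟨1, isReverseLinearExtension_one, by simp⟩
  | tail _ hsw ih =>
    obtain ⟨π, hπ, rfl⟩ := ih
    obtain ⟨A, C, x, y, hc, hf, rfl⟩ := hsw
    obtain ⟨k, k', hk, hk', rfl, rfl⟩ := List.exists_apply_eq_of_ofFn_eq_append hf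
    exact ⟨_, hπ.swap_trans hk' hc, (List.ofFn_comp_swap_of_eq_append hk hk' hf).symm⟩

end Heap

open Heap in
/-- The reduced words for a fully commutative element `w` are exactly the words read off
from the reverse linear extensions of its heap. -/
theorem isReducedWordFor_iff_reverseLinearExtension
    {B : Type*} {W : Type*} [Group W] {M : CoxeterMatrix B}
    (cs : CoxeterSystem M W) (ω : List B)
    (hred : cs.IsReduced ω) (hfc : FullyCommutative cs (cs.wordProd ω))
    (l : List B) :
    IsReducedWordFor cs (cs.wordProd ω) l ↔
      ∃ π : Equiv.Perm (Fin ω.length),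
        (∀ a b : Fin ω.length, heapLT cs ω (π a) (π b) → b < a) ∧
        l = List.ofFn (fun a => ω.get (π a)) := by
  constructor
  · exact fun hl => exists_isReverseLinearExtension_of_reflTransGen (hfc ω l ⟨rfl, hred⟩ hl)
  · rintro ⟨π, hπ, rfl⟩
    have hprod : cs.wordProd _ = cs.wordProd ω := IsReverseLinearExtension.wordProd_ofFn hπ
    refine ⟨hprod, ?_⟩
    rw [CoxeterSystem.IsReduced, hprod, List.length_ofFn]
    exact hred
end

section
/- Let (W, S) be a Coxeter system, let w ∈ W be fully commutative with reduced word s_{i_1} ⋯ s_{i_ℓ} and heap P_w. For an order ideal I of P_w, choose any linear extension ρ of P_w whose first |I| values ρ(1), …, ρ(|I|) enumerate I, and set φ(I) = s_{i_{ρ(|I|)}} ⋯ s_{i_{ρ(2)}} s_{i_{ρ(1)}}. Then φ(I) is independent of the chosen linear extension, and φ is an order isomorphism from J(P_w) (ordered by inclusion) onto the set {x ∈ W : x ≤_L w} ordered by the left weak Bruhat order. -/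
namespace Heap

variable {B : Type*} {W : Type*} [Group W] {M : CoxeterMatrix B}

/-- An order ideal of the heap of `ω`. -/
def HeapIdeal (cs : CoxeterSystem M W) (ω : List B) (I : Finset (Fin ω.length)) : Prop :=
  ∀ ⦃x y : Fin ω.length⦄, y ∈ I → heapLT cs ω x y → x ∈ I

/-- `ρ` is a linear extension of the heap of `ω`: it lists the heap elements in an order
compatible with the heap order. -/
def IsLinearExtension (cs : CoxeterSystem M W) (ω : List B)
    (ρ : Equiv.Perm (Fin ω.length)) : Prop :=
  ∀ a b : Fin ω.length, heapLT cs ω (ρ a) (ρ b) → a < b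

/-- The first `|I|` values of `ρ` enumerate `I`. -/
def EnumeratesFirst (ω : List B) (ρ : Equiv.Perm (Fin ω.length))
    (I : Finset (Fin ω.length)) : Prop :=
  ∀ a : Fin ω.length, ρ a ∈ I ↔ a.val < I.card

/-- The element `φ(I) = s_{i_{ρ(|I|)}} ⋯ s_{i_{ρ(2)}} s_{i_{ρ(1)}}` read from a linear
extension `ρ` whose first `|I|` values enumerate `I`. -/
def phiWord (cs : CoxeterSystem M W) (ω : List B) (ρ : Equiv.Perm (Fin ω.length))
    (I : Finset (Fin ω.length)) : W :=
  cs.wordProd (((List.ofFn (fun a => ω.get (ρ a))).take I.card).reverse)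

/-- The left weak Bruhat order: `x ≤_L w` iff `ℓ(x) + ℓ(w x⁻¹) = ℓ(w)`. -/
def LeftWeakLE (cs : CoxeterSystem M W) (x w : W) : Prop :=
  cs.length x + cs.length (w * x⁻¹) = cs.length w

end Heap

/-!
Positions of `ω` form the heap, later letters lying lower. Two listings of the same positions
that never put a position before one lying above it have the same product: a pair listed in
opposite orders is incomparable, so its letters commute. Hence `φ(I)` is the product of the
letters at `I` in word order, and for ideals `I ⊆ J` we get `φ(J) = φ(J \ I) φ(I)`; with `J` the
whole heap, `ℓ(w) = ℓ(ω)` forces the lengths to add up, which gives `φ(I) ≤_L φ(J)`.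

Conversely, full commutativity connects any reduced word of `w` to `ω` by commutation moves,
which transport the increasing listing of positions to a top-down listing reading off that word.
Its final segments are ideals, so a reduced factorisation `w = z y x` yields ideals `I ⊆ J` with
`φ(I) = x` and `φ(J) = y x`. Finally `φ` is injective on ideals: if `φ(I) = φ(J)`, full
commutativity makes the letter multisets of `I` and `J` equal, and since two occurrences of a
letter in a reduced word are comparable in the heap, an ideal meets each letter class in a final
segment of positions.
-/

theorem List.Perm.prod_map_eq_of_pairwise {α M : Type*} [Monoid M] (f : α → M)
    {r : α → α → Prop} (hcomm : ∀ a b, r a b → r b a → Commute (f a) (f b))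
    {l l' : List α} (hp : l.Perm l') (hl : l.Pairwise r) (hl' : l'.Pairwise r) :
    (l.map f).prod = (l'.map f).prod := by
  induction l' generalizing l with
  | nil => rw [hp.eq_nil]
  | cons h T ih =>
    obtain ⟨A, C, rfl⟩ := List.append_of_mem (hp.symm.subset List.mem_cons_self)
    have hA : ∀ a ∈ A, Commute (f h) (f a) := by
      intro a ha
      by_cases hah : a = h
      · subst hah
        exact Commute.refl _
      have haT : a ∈ T :=
        (List.mem_cons.mp (hp.subset (List.mem_append_left _ ha))).resolve_left hah
      exact (hcomm a h ((List.pairwise_append.mp hl).2.2 a ha h List.mem_cons_self)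
        ((List.pairwise_cons.mp hl').1 a haT)).symm
    have hcA : Commute (f h) (A.map f).prod :=
      Commute.list_prod_right _ _ (by simpa using hA)
    have hAC : (A ++ C).Perm T := (List.perm_middle.symm.trans hp).cons_inv
    calc ((A ++ h :: C).map f).prod = f h * ((A ++ C).map f).prod := by
          simp only [List.map_append, List.map_cons, List.prod_append, List.prod_cons,
            ← mul_assoc, hcA.eq]
      _ = ((h :: T).map f).prod := by
          rw [ih hAC (hl.sublist ((List.sublist_cons_self h C).append_left A)) hl'.of_cons,
            List.map_cons, List.prod_cons]

namespace Heap

variable {B W : Type*} [Group W] {M : CoxeterMatrix B} {cs : CoxeterSystem M W} {ω : List B}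

theorem wordProd_cons_append_cons_of_commute {x : B} {l : List B}
    (h : ∀ b ∈ l, Commute (cs.simple x) (cs.simple b)) (l' : List B) :
    cs.wordProd (x :: (l ++ x :: l')) = cs.wordProd (l ++ l') := by
  have hc : Commute (cs.simple x) (cs.wordProd l) :=
    Commute.list_prod_right _ _ (by simpa using h)
  simp only [cs.wordProd_cons, cs.wordProd_append]
  rw [← mul_assoc, hc.eq, mul_assoc, cs.simple_mul_simple_cancel_left]

theorem exists_not_commute_of_isReduced {x : B} {l₀ l l' : List B}
    (hred : cs.IsReduced (l₀ ++ x :: (l ++ x :: l'))) :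
    ∃ b ∈ l, ¬ Commute (cs.simple x) (cs.simple b) := by
  by_contra! h
  have hle := cs.length_wordProd_le (l₀ ++ (l ++ l'))
  rw [cs.wordProd_append, ← wordProd_cons_append_cons_of_commute h, ← cs.wordProd_append,
    hred.eq] at hle
  simp only [List.length_append, List.length_cons] at hle
  omega

theorem LeftWeakLE.exists_isReduced_append {x y : W} (hxy : LeftWeakLE cs x y) {l : List B}
    (hl : cs.IsReduced l) (hlx : cs.wordProd l = x) :
    ∃ l₀, cs.IsReduced (l₀ ++ l) ∧ cs.wordProd (l₀ ++ l) = y := by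
  obtain ⟨l₀, hl₀, h⟩ := cs.exists_isReduced (y * x⁻¹)
  have hprod : cs.wordProd (l₀ ++ l) = y := by
    rw [cs.wordProd_append, ← h, hlx, inv_mul_cancel_right]
  refine ⟨l₀, ?_, hprod⟩
  unfold CoxeterSystem.IsReduced LeftWeakLE at *
  rw [hprod, List.length_append, ← hl₀, ← hl, ← h, hlx]
  omega

def heapStep (cs : CoxeterSystem M W) (ω : List B) (a b : Fin ω.length) : Prop :=
  b.val < a.val ∧ ¬ Commute (cs.simple (ω.get a)) (cs.simple (ω.get b))

theorem commute_of_not_heapStep {a b : Fin ω.length} (hab : ¬ heapStep cs ω a b)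
    (hba : ¬ heapStep cs ω b a) : Commute (cs.simple (ω.get a)) (cs.simple (ω.get b)) := by
  rcases lt_trichotomy a b with h | rfl | h
  · by_contra hc
    exact hba ⟨h, fun h' => hc h'.symm⟩
  · exact Commute.refl _
  · by_contra hc
    exact hab ⟨h, hc⟩

/-- `L` lists positions from the top of the heap downwards; since later letters of `ω` lie
lower in the heap, every increasing list of positions qualifies. -/
def IsTopDown (cs : CoxeterSystem M W) (ω : List B) (L : List (Fin ω.length)) : Prop :=
  L.Pairwise fun a b => ¬ heapStep cs ω a b

def subwordProd (cs : CoxeterSystem M W) (ω : List B) (L : List (Fin ω.length)) : W :=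
  cs.wordProd (L.map ω.get)

/-- The paper's `φ(I)`, as the product of the letters at the positions in `I` in word order. -/
def phi (cs : CoxeterSystem M W) (ω : List B) (I : Finset (Fin ω.length)) : W :=
  subwordProd cs ω I.sort

theorem isTopDown_sort (I : Finset (Fin ω.length)) : IsTopDown cs ω I.sort :=
  (I.pairwise_sort _).imp fun hab hstep => absurd hstep.1 (not_lt.mpr hab)

theorem phi_univ : phi cs ω Finset.univ = cs.wordProd ω := by
  rw [phi, Fin.sort_univ, subwordProd, List.map_get_finRange]

theorem length_phi_le (I : Finset (Fin ω.length)) : cs.length (phi cs ω I) ≤ I.card :=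
  (cs.length_wordProd_le _).trans (by simp)

theorem subwordProd_eq_phi {L : List (Fin ω.length)} {I : Finset (Fin ω.length)}
    (hL : IsTopDown cs ω L) (hnd : L.Nodup) (hmem : ∀ a, a ∈ L ↔ a ∈ I) :
    subwordProd cs ω L = phi cs ω I := by
  have hp : L.Perm I.sort :=
    (List.perm_ext_iff_of_nodup hnd (I.sort_nodup _)).mpr (by simpa using hmem)
  simpa only [phi, subwordProd, CoxeterSystem.wordProd, List.map_map] using
    hp.prod_map_eq_of_pairwise (cs.simple ∘ ω.get)
      (fun a b hab hba => commute_of_not_heapStep hab hba) hL (isTopDown_sort I)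

theorem phiWord_eq_phi {ρ : Equiv.Perm (Fin ω.length)} {I : Finset (Fin ω.length)}
    (hρ : IsLinearExtension cs ω ρ) (hI : EnumeratesFirst ω ρ I) :
    phiWord cs ω ρ I = phi cs ω I := by
  have hword : phiWord cs ω ρ I = subwordProd cs ω (((List.ofFn ρ).take I.card).reverse) := by
    rw [phiWord, subwordProd, List.map_reverse, List.map_take, List.map_ofFn]
    rfl
  rw [hword]
  refine subwordProd_eq_phi ?_ ?_ ?_
  · refine List.pairwise_reverse.mpr (List.Pairwise.sublist (List.take_sublist _ _) ?_)
    exact List.pairwise_ofFn.mpr fun a b hab hstep =>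
      (lt_asymm hab) (hρ b a (Relation.TransGen.single hstep))
  · exact List.nodup_reverse.mpr
      ((List.take_sublist _ _).nodup (List.nodup_ofFn.mpr ρ.injective))
  · intro x
    rw [List.mem_reverse, List.mem_take_iff_getElem]
    constructor
    · rintro ⟨i, hi, rfl⟩
      simp only [List.getElem_ofFn]
      exact (hI _).mpr (lt_of_lt_of_le hi (min_le_left _ _))
    · intro hx
      refine ⟨ρ.symm x, ?_, by simp⟩
      simp only [List.length_ofFn, lt_min_iff]
      exact ⟨(hI _).mp (by simpa using hx), (ρ.symm x).isLt⟩

theorem phi_eq_phi_sdiff_mul {I J : Finset (Fin ω.length)} (hI : HeapIdeal cs ω I)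
    (hIJ : I ⊆ J) : phi cs ω J = phi cs ω (J \ I) * phi cs ω I := by
  have hsplit : phi cs ω (J \ I) * phi cs ω I = subwordProd cs ω ((J \ I).sort ++ I.sort) := by
    rw [phi, phi, subwordProd, subwordProd, subwordProd, List.map_append, cs.wordProd_append]
  rw [hsplit, subwordProd_eq_phi]
  · refine List.pairwise_append.mpr ⟨isTopDown_sort _, isTopDown_sort _, ?_⟩
    intro a ha b hb hstep
    simp only [Finset.mem_sort, Finset.mem_sdiff] at ha hb
    exact ha.2 (hI hb (Relation.TransGen.single hstep))
  · refine List.nodup_append.mpr ⟨Finset.sort_nodup _ _, Finset.sort_nodup _ _, ?_⟩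
    intro a ha b hb hab
    simp only [Finset.mem_sort, Finset.mem_sdiff] at ha hb
    exact ha.2 (hab ▸ hb)
  · intro a
    simp only [List.mem_append, Finset.mem_sort, Finset.mem_sdiff]
    constructor
    · rintro (ha | ha)
      exacts [ha.1, hIJ ha]
    · intro ha
      by_cases haI : a ∈ I
      exacts [Or.inr haI, Or.inl ⟨ha, haI⟩]

theorem HeapIdeal.length_phi (hred : cs.IsReduced ω) {I : Finset (Fin ω.length)}
    (hI : HeapIdeal cs ω I) : cs.length (phi cs ω I) = I.card := by
  have hdec := phi_eq_phi_sdiff_mul hI (Finset.subset_univ I)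
  rw [phi_univ] at hdec
  have hlen := cs.length_mul_le (phi cs ω (Finset.univ \ I)) (phi cs ω I)
  rw [← hdec, hred.eq] at hlen
  have hc : cs.length (phi cs ω (Finset.univ \ I)) ≤ _ := length_phi_le _
  rw [Finset.card_univ_sdiff, Fintype.card_fin] at hc
  have : cs.length (phi cs ω I) ≤ _ := length_phi_le _
  have := I.card_le_univ
  rw [Fintype.card_fin] at this
  omega

theorem leftWeakLE_phi_of_subset (hred : cs.IsReduced ω) {I J : Finset (Fin ω.length)}
    (hI : HeapIdeal cs ω I) (hJ : HeapIdeal cs ω J) (hIJ : I ⊆ J) :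
    LeftWeakLE cs (phi cs ω I) (phi cs ω J) := by
  have hdec := phi_eq_phi_sdiff_mul hI hIJ
  have hIlen := hI.length_phi hred
  have hJlen := hJ.length_phi hred
  have hlen := cs.length_mul_le (phi cs ω (J \ I)) (phi cs ω I)
  have hdiff : cs.length (phi cs ω (J \ I)) ≤ _ := length_phi_le _
  rw [Finset.card_sdiff_of_subset hIJ] at hdiff
  rw [← hdec] at hlen
  rw [LeftWeakLE, hdec, mul_inv_cancel_right, ← hdec, hIlen, hJlen]
  have := Finset.card_le_card hIJ
  omega

theorem HeapIdeal.leftWeakLE_phi (hred : cs.IsReduced ω) {I : Finset (Fin ω.length)}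
    (hI : HeapIdeal cs ω I) : LeftWeakLE cs (phi cs ω I) (cs.wordProd ω) := by
  simpa only [phi_univ] using
    leftWeakLE_phi_of_subset hred hI (fun _ _ _ _ => Finset.mem_univ _) (Finset.subset_univ I)

theorem heapLT_of_lt_of_get_eq (hred : cs.IsReduced ω) {p q : Fin ω.length} (hpq : p < q)
    (h : ω.get p = ω.get q) : heapLT cs ω q p := by
  have hpq' : p.val < q.val := hpq
  set mid := (ω.drop (p + 1)).take (q - p - 1) with hmid
  have hq : ω.drop (p + 1) = mid ++ ω.drop q := by
    conv_lhs => rw [← List.take_append_drop (q - p - 1) (ω.drop (p + 1))]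
    rw [List.drop_drop, show p + 1 + (q - p - 1) = (q : ℕ) by omega]
  have hdec : ω = ω.take p ++ ω.get p :: (mid ++ ω.get q :: ω.drop (q + 1)) := by
    simp only [List.get_eq_getElem]
    rw [← List.drop_eq_getElem_cons q.isLt, ← hq, ← List.drop_eq_getElem_cons p.isLt,
      List.take_append_drop]
  rw [← h] at hdec
  obtain ⟨b, hb, hnc⟩ := exists_not_commute_of_isReduced (hdec ▸ hred)
  obtain ⟨i, hi, rfl⟩ := List.mem_iff_getElem.mp hb
  have hi' : i < q - p - 1 := by
    simp only [hmid, List.length_take, List.length_drop, lt_inf_iff] at hi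
    omega
  let t : Fin ω.length := ⟨p + 1 + i, by omega⟩
  have ht : ω.get t = mid[i] := by simp [t, hmid]
  refine Relation.TransGen.head (b := t) ⟨by show p + 1 + i < (q : ℕ); omega, ?_⟩
    (.single ⟨by show (p : ℕ) < p + 1 + i; omega, ?_⟩)
  · rwa [ht, ← h]
  · rw [ht]
    exact fun hc => hnc hc.symm

theorem HeapIdeal.mem_of_le_of_get_eq (hred : cs.IsReduced ω) {I : Finset (Fin ω.length)}
    (hI : HeapIdeal cs ω I) {p q : Fin ω.length} (hp : p ∈ I) (hpq : p ≤ q)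
    (h : ω.get p = ω.get q) : q ∈ I := by
  rcases hpq.eq_or_lt with rfl | hlt
  · exact hp
  · exact hI hp (heapLT_of_lt_of_get_eq hred hlt h)

/-- In each letter class an ideal is a final segment of positions, so it is determined by how
many letters of each kind it contains. -/
theorem HeapIdeal.subset_of_map_get_le (hred : cs.IsReduced ω) {I J : Finset (Fin ω.length)}
    (hI : HeapIdeal cs ω I) (hJ : HeapIdeal cs ω J) (h : I.val.map ω.get ≤ J.val.map ω.get) :
    I ⊆ J := by
  classical
  intro p hp
  by_contra hpJ
  have hsub : J.filter (fun a => ω.get p = ω.get a) ⊆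
      (I.filter (fun a => ω.get p = ω.get a)).erase p := by
    intro q hq
    rw [Finset.mem_filter] at hq
    have hpq : p < q :=
      lt_of_not_ge fun hqp => hpJ (hJ.mem_of_le_of_get_eq hred hq.1 hqp hq.2.symm)
    exact Finset.mem_erase.mpr
      ⟨hpq.ne', Finset.mem_filter.mpr ⟨hI.mem_of_le_of_get_eq hred hp hpq.le hq.2, hq.2⟩⟩
  have hlt := (Finset.card_le_card hsub).trans_lt
    (Finset.card_erase_lt_of_mem (Finset.mem_filter.mpr ⟨hp, rfl⟩))
  have hle := Multiset.count_le_of_le (ω.get p) h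
  rw [Multiset.count_map, Multiset.count_map] at hle
  exact hle.not_gt hlt

theorem perm_of_reflTransGen_commSwap {l₁ l₂ : List B}
    (h : Relation.ReflTransGen (CommSwap cs) l₁ l₂) : l₁.Perm l₂ := by
  induction h with
  | refl => rfl
  | tail _ hstep ih =>
    obtain ⟨a, b, x, y, -, rfl, rfl⟩ := hstep
    exact ih.trans ((List.Perm.swap y x b).append_left a)

theorem HeapIdeal.perm_of_phi_eq (hred : cs.IsReduced ω)
    (hfc : FullyCommutative cs (cs.wordProd ω)) {I J : Finset (Fin ω.length)}
    (hI : HeapIdeal cs ω I) (hJ : HeapIdeal cs ω J) (h : phi cs ω I = phi cs ω J) :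
    (I.sort.map ω.get).Perm (J.sort.map ω.get) := by
  set l₀ := (Finset.univ \ I).sort.map ω.get
  have hdec := phi_eq_phi_sdiff_mul hI (Finset.subset_univ I)
  rw [phi_univ] at hdec
  have hcard : (Finset.univ \ I).card + I.card = ω.length := by
    rw [Finset.card_univ_sdiff, Fintype.card_fin,
      Nat.sub_add_cancel (by simpa using I.card_le_univ)]
  have hreduced : ∀ K : Finset (Fin ω.length), phi cs ω K = phi cs ω I → K.card = I.card →
      IsReducedWordFor cs (cs.wordProd ω) (l₀ ++ K.sort.map ω.get) := by
    intro K hK hKcard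
    have hprod : cs.wordProd (l₀ ++ K.sort.map ω.get) = cs.wordProd ω := by
      rw [cs.wordProd_append, hdec, ← hK]
      rfl
    refine ⟨hprod, ?_⟩
    rw [CoxeterSystem.IsReduced, hprod, hred.eq]
    simp [l₀, hKcard, hcard]
  have hJcard : J.card = I.card := by rw [← hJ.length_phi hred, ← h, hI.length_phi hred]
  exact (List.perm_append_left_iff l₀).mp <| perm_of_reflTransGen_commSwap <|
    hfc _ _ (hreduced I rfl rfl) (hreduced J h.symm hJcard)

theorem HeapIdeal.eq_of_phi_eq (hred : cs.IsReduced ω)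
    (hfc : FullyCommutative cs (cs.wordProd ω)) {I J : Finset (Fin ω.length)}
    (hI : HeapIdeal cs ω I) (hJ : HeapIdeal cs ω J) (h : phi cs ω I = phi cs ω J) : I = J := by
  have hletters : I.val.map ω.get = J.val.map ω.get := by
    rw [← Finset.sort_eq I (· ≤ ·), ← Finset.sort_eq J (· ≤ ·), Multiset.map_coe,
      Multiset.map_coe]
    exact Multiset.coe_eq_coe.mpr (hI.perm_of_phi_eq hred hfc hJ h)
  exact (hI.subset_of_map_get_le hred hJ hletters.le).antisymm
    (hJ.subset_of_map_get_le hred hI hletters.ge)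

theorem IsTopDown.exists_perm_of_commSwap {l₁ l₂ : List B} (h : CommSwap cs l₁ l₂)
    {L : List (Fin ω.length)} (hL : IsTopDown cs ω L) (hmap : L.map ω.get = l₁) :
    ∃ L', L'.Perm L ∧ IsTopDown cs ω L' ∧ L'.map ω.get = l₂ := by
  obtain ⟨a, b, x, y, hxy, rfl, rfl⟩ := h
  obtain ⟨La, Lxyb, rfl, rfl, hxyb⟩ := List.map_eq_append_iff.mp hmap
  obtain ⟨i, Lyb, rfl, rfl, hyb⟩ := List.map_eq_cons_iff.mp hxyb
  obtain ⟨j, Lb, rfl, rfl, rfl⟩ := List.map_eq_cons_iff.mp hyb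
  refine ⟨La ++ j :: i :: Lb, (List.Perm.swap i j Lb).append_left La, ?_, by simp⟩
  have hji : ¬ heapStep cs ω j i := fun hs => hs.2 hxy.symm
  unfold IsTopDown at hL ⊢
  simp only [List.pairwise_append, List.pairwise_cons, List.mem_cons] at hL ⊢
  grind

theorem IsTopDown.exists_perm_of_reflTransGen {l₁ l₂ : List B}
    (h : Relation.ReflTransGen (CommSwap cs) l₁ l₂) {L : List (Fin ω.length)}
    (hL : IsTopDown cs ω L) (hmap : L.map ω.get = l₁) :
    ∃ L', L'.Perm L ∧ IsTopDown cs ω L' ∧ L'.map ω.get = l₂ := by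
  induction h with
  | refl => exact ⟨L, .refl L, hL, hmap⟩
  | tail _ hstep ih =>
    obtain ⟨L', hp, hL', hmap'⟩ := ih
    obtain ⟨L'', hp', hL'', hmap''⟩ := hL'.exists_perm_of_commSwap hstep hmap'
    exact ⟨L'', hp'.trans hp, hL'', hmap''⟩

theorem exists_isTopDown_perm_finRange (hred : cs.IsReduced ω)
    (hfc : FullyCommutative cs (cs.wordProd ω)) {l : List B} (hl : cs.IsReduced l)
    (hlw : cs.wordProd l = cs.wordProd ω) :
    ∃ L, L.Perm (List.finRange ω.length) ∧ IsTopDown cs ω L ∧ L.map ω.get = l := by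
  have hfin : IsTopDown cs ω (List.finRange ω.length) := by
    unfold IsTopDown
    exact (List.pairwise_lt_finRange _).imp fun {a b} (hab : a < b) (hs : heapStep cs ω a b) =>
      lt_asymm hab hs.1
  exact hfin.exists_perm_of_reflTransGen (hfc ω l ⟨rfl, hred⟩ ⟨hlw, hl⟩)
    (List.map_get_finRange ω)

theorem heapIdeal_toFinset_of_isTopDown_append {L₁ L₂ : List (Fin ω.length)}
    (hcover : ∀ a, a ∈ L₁ ++ L₂) (h : IsTopDown cs ω (L₁ ++ L₂)) :
    HeapIdeal cs ω L₂.toFinset := by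
  have hstep : ∀ a b, heapStep cs ω a b → b ∈ L₂ → a ∈ L₂ := by
    intro a b hab hb
    rcases List.mem_append.mp (hcover a) with ha | ha
    · exact absurd hab ((List.pairwise_append.mp h).2.2 a ha b hb)
    · exact ha
  intro x y hy hxy
  rw [List.mem_toFinset] at hy ⊢
  induction hxy with
  | single hs => exact hstep _ _ hs hy
  | tail _ hs ih => exact ih (hstep _ _ hs hy)

theorem exists_heapIdeal_of_isReduced_append (hred : cs.IsReduced ω)
    (hfc : FullyCommutative cs (cs.wordProd ω)) {l₀ l₁ l₂ : List B}
    (hl : cs.IsReduced (l₀ ++ (l₁ ++ l₂)))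
    (hlw : cs.wordProd (l₀ ++ (l₁ ++ l₂)) = cs.wordProd ω) :
    ∃ I J, HeapIdeal cs ω I ∧ HeapIdeal cs ω J ∧ I ⊆ J ∧
      phi cs ω I = cs.wordProd l₂ ∧ phi cs ω J = cs.wordProd (l₁ ++ l₂) := by
  obtain ⟨L, hp, hL, hmap⟩ := exists_isTopDown_perm_finRange hred hfc hl hlw
  obtain ⟨L₀, L₁₂, rfl, -, hmap₁₂⟩ := List.map_eq_append_iff.mp hmap
  obtain ⟨L₁, L₂, rfl, rfl, rfl⟩ := List.map_eq_append_iff.mp hmap₁₂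
  have hnd := hp.nodup_iff.mpr (List.nodup_finRange _)
  have hcover : ∀ a, a ∈ L₀ ++ (L₁ ++ L₂) := fun a => hp.mem_iff.mpr (List.mem_finRange a)
  have hphi : ∀ {L' : List (Fin ω.length)}, L'.Sublist (L₀ ++ (L₁ ++ L₂)) →
      phi cs ω L'.toFinset = cs.wordProd (L'.map ω.get) :=
    fun hsub => (subwordProd_eq_phi (hL.sublist hsub) (hsub.nodup hnd) (by simp)).symm
  refine ⟨L₂.toFinset, (L₁ ++ L₂).toFinset, ?_,
    heapIdeal_toFinset_of_isTopDown_append hcover hL,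
    fun _ ha => List.mem_toFinset.mpr (List.mem_append_right _ (List.mem_toFinset.mp ha)),
    hphi ?_, by rw [hphi (List.sublist_append_right _ _), List.map_append]⟩
  · rw [← List.append_assoc] at hcover hL
    exact heapIdeal_toFinset_of_isTopDown_append hcover hL
  · exact (List.sublist_append_right L₁ L₂).trans (List.sublist_append_right L₀ _)

end Heap

open Heap in
/-- `φ` is well defined (independent of the chosen linear extension) and is an order
isomorphism from the order ideals of the heap of a fully commutative element `w`,
ordered by inclusion, onto `{x ∈ W : x ≤_L w}` with the left weak Bruhat order. -/
theorem phiWord_wellDefined_and_orderIso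
    {B : Type*} {W : Type*} [Group W] {M : CoxeterMatrix B}
    (cs : CoxeterSystem M W) (ω : List B)
    (hred : cs.IsReduced ω) (hfc : FullyCommutative cs (cs.wordProd ω)) :
    (∀ I : Finset (Fin ω.length), HeapIdeal cs ω I →
      ∀ ρ ρ' : Equiv.Perm (Fin ω.length),
        IsLinearExtension cs ω ρ → IsLinearExtension cs ω ρ' →
        EnumeratesFirst ω ρ I → EnumeratesFirst ω ρ' I →
        phiWord cs ω ρ I = phiWord cs ω ρ' I) ∧
    ∃ F : {I : Finset (Fin ω.length) // HeapIdeal cs ω I} → W,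
      (∀ (I : {I : Finset (Fin ω.length) // HeapIdeal cs ω I})
          (ρ : Equiv.Perm (Fin ω.length)),
          IsLinearExtension cs ω ρ → EnumeratesFirst ω ρ I.1 →
          F I = phiWord cs ω ρ I.1) ∧
      (∀ I, LeftWeakLE cs (F I) (cs.wordProd ω)) ∧
      (∀ x : W, LeftWeakLE cs x (cs.wordProd ω) → ∃ I, F I = x) ∧
      (∀ I J, I.1 ⊆ J.1 ↔ LeftWeakLE cs (F I) (F J)) := by
  refine ⟨fun _ _ _ _ hρ hρ' hI hI' => by rw [phiWord_eq_phi hρ hI, phiWord_eq_phi hρ' hI'],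
    fun I => phi cs ω I.1, fun I ρ hρ hI => (phiWord_eq_phi hρ hI).symm,
    fun I => I.2.leftWeakLE_phi hred, fun x hx => ?_,
    fun I J => ⟨leftWeakLE_phi_of_subset hred I.2 J.2, fun hIJ => ?_⟩⟩
  · obtain ⟨l, hl, rfl⟩ := cs.exists_isReduced x
    obtain ⟨l₀, hl₀, hw⟩ := hx.exists_isReduced_append hl rfl
    obtain ⟨I, -, hI, -, -, hIx, -⟩ :=
      exists_heapIdeal_of_isReduced_append (l₁ := []) hred hfc hl₀ hw
    exact ⟨⟨I, hI⟩, hIx⟩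
  · obtain ⟨l₂, hl₂, hIl⟩ := cs.exists_isReduced (phi cs ω I.1)
    obtain ⟨l₁, hl₁₂, hJl⟩ := hIJ.exists_isReduced_append hl₂ hIl.symm
    obtain ⟨l₀, hl, hw⟩ := (J.2.leftWeakLE_phi hred).exists_isReduced_append hl₁₂ hJl
    obtain ⟨I', J', hI', hJ', hsub, hI'l, hJ'l⟩ :=
      exists_heapIdeal_of_isReduced_append hred hfc hl hw
    rwa [← hI'.eq_of_phi_eq hred hfc I.2 (hI'l.trans hIl.symm),
      ← hJ'.eq_of_phi_eq hred hfc J.2 (hJ'l.trans hJl)]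
end

section
/- Let (W, S) be a Coxeter system, let w ∈ W be fully commutative with reduced word s_{i_1} ⋯ s_{i_ℓ} and heap P_w, and fix a generator s_k ∈ S with C_k = {j : s_{i_j} = s_k}. Then for every order ideal I of P_w, the order ideal obtained from I by applying the toggles t_j for all j ∈ C_k (in any order; these toggles pairwise commute) differs from I in at most one element. -/
open Classical in
/-- The toggle `t_p` of a finite set at an element `p`, with respect to a relation `lt`. -/
noncomputable def rtoggle {γ : Type*} [DecidableEq γ] (lt : γ → γ → Prop) (p : γ)
    (I : Finset γ) : Finset γ :=
  if p ∈ I ∧ ∀ y ∈ I, ¬ lt p y then I.erase p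
  else if p ∉ I ∧ ∀ ⦃x y : γ⦄, y ∈ insert p I → lt x y → x ∈ insert p I then insert p I
  else I

/-!
In a reduced word, two occurrences of `s_k` are separated by a letter that does not commute with
`s_k`, so any two distinct elements `p`, `q` of the class `C_k` have some `c` strictly between
them in the heap. If the toggle at `q` acts on an order ideal `J` that agrees with the ideal `I`
away from `p`, then whether `c ∈ J` is forced, and with it `p` lies in both or in neither of `J`
and `I`. Hence after each toggle the current ideal still differs from `I` in at most one element
of `C_k`.
-/

section Toggle

variable {γ : Type*} [DecidableEq γ] (lt : γ → γ → Prop)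

def IsOrderIdeal (J : Finset γ) : Prop :=
  ∀ ⦃x y : γ⦄, y ∈ J → lt x y → x ∈ J

def IsToggleable (q : γ) (J : Finset γ) : Prop :=
  (q ∈ J ∧ ∀ y ∈ J, ¬ lt q y) ∨ (q ∉ J ∧ IsOrderIdeal lt (insert q J))

def IsGappedChain (C : Set γ) : Prop :=
  ∀ ⦃p q : γ⦄, p ∈ C → q ∈ C → p ≠ q →
    ∃ c, c ≠ p ∧ c ≠ q ∧ ((lt q c ∧ lt c p) ∨ (lt p c ∧ lt c q))

def IsOneStepFrom (C : Set γ) (I J : Finset γ) : Prop :=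
  IsOrderIdeal lt J ∧ (J = I ∨ ∃ p ∈ C, ∀ x ≠ p, x ∈ J ↔ x ∈ I)

variable {lt}

theorem isOrderIdeal_rtoggle {J : Finset γ} (hJ : IsOrderIdeal lt J) (q : γ) :
    IsOrderIdeal lt (rtoggle lt q J) := by
  unfold rtoggle
  split_ifs with hmax hins
  · intro x y hy hxy
    obtain ⟨-, hyJ⟩ := Finset.mem_erase.mp hy
    exact Finset.mem_erase.mpr ⟨by rintro rfl; exact hmax.2 y hyJ hxy, hJ hyJ hxy⟩
  · exact hins.2
  · exact hJ

theorem mem_rtoggle_iff_of_ne {q x : γ} (J : Finset γ) (hx : x ≠ q) :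
    x ∈ rtoggle lt q J ↔ x ∈ J := by
  unfold rtoggle
  split_ifs
  · simp [hx]
  · simp [hx]
  · exact Iff.rfl

theorem isToggleable_of_rtoggle_ne {q : γ} {J : Finset γ} (h : rtoggle lt q J ≠ J) :
    IsToggleable lt q J := by
  unfold rtoggle at h
  split_ifs at h with hmax hins
  · exact Or.inl hmax
  · exact Or.inr hins
  · exact absurd rfl h

theorem mem_iff_mem_of_isToggleable {C : Set γ} (hC : IsGappedChain lt C) {I J : Finset γ}
    (hI : IsOrderIdeal lt I) (hJ : IsOrderIdeal lt J) {p q : γ} (hp : p ∈ C) (hq : q ∈ C)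
    (hpq : p ≠ q) (hagree : ∀ x ≠ p, x ∈ J ↔ x ∈ I) (htog : IsToggleable lt q J) :
    p ∈ J ↔ p ∈ I := by
  obtain ⟨c, hcp, hcq, ⟨hqc, hcp'⟩ | ⟨hpc, hcq'⟩⟩ := hC hp hq hpq
  · have hcJ : c ∉ J := by
      rcases htog with ⟨hqJ, hmax⟩ | ⟨hqJ, -⟩
      · exact fun hcJ => hmax c hcJ hqc
      · exact fun hcJ => hqJ ((hagree q hpq.symm).mpr (hI ((hagree c hcp).mp hcJ) hqc))
    have hcI : c ∉ I := (hagree c hcp).not.mp hcJ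
    exact iff_of_false (fun hpJ => hcJ (hJ hpJ hcp')) (fun hpI => hcI (hI hpI hcp'))
  · have hcJ : c ∈ J := by
      rcases htog with ⟨hqJ, -⟩ | ⟨-, hins⟩
      · exact hJ hqJ hcq'
      · exact (Finset.mem_insert.mp (hins (Finset.mem_insert_self q J) hcq')).resolve_left hcq
    exact iff_of_true (hJ hcJ hpc) (hI ((hagree c hcp).mp hcJ) hpc)

theorem isOneStepFrom_rtoggle {C : Set γ} (hC : IsGappedChain lt C) {I J : Finset γ}
    (hI : IsOrderIdeal lt I) (hJ : IsOneStepFrom lt C I J) {q : γ} (hq : q ∈ C) :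
    IsOneStepFrom lt C I (rtoggle lt q J) := by
  obtain ⟨hJideal, rfl | ⟨p, hp, hagree⟩⟩ := hJ
  · exact ⟨isOrderIdeal_rtoggle hJideal q,
      Or.inr ⟨q, hq, fun x hx => mem_rtoggle_iff_of_ne J hx⟩⟩
  refine ⟨isOrderIdeal_rtoggle hJideal q, ?_⟩
  by_cases hfix : rtoggle lt q J = J
  · rw [hfix]
    exact Or.inr ⟨p, hp, hagree⟩
  by_cases hpq : p = q
  · subst hpq
    exact Or.inr ⟨p, hp, fun x hx => (mem_rtoggle_iff_of_ne J hx).trans (hagree x hx)⟩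
  have hpJ : p ∈ J ↔ p ∈ I := mem_iff_mem_of_isToggleable hC hI hJideal hp hq hpq hagree
    (isToggleable_of_rtoggle_ne hfix)
  refine Or.inr ⟨q, hq, fun x hx => (mem_rtoggle_iff_of_ne J hx).trans ?_⟩
  by_cases hxp : x = p
  · exact hxp ▸ hpJ
  · exact hagree x hxp

theorem isOneStepFrom_foldr_rtoggle {C : Set γ} (hC : IsGappedChain lt C) {I : Finset γ}
    (hI : IsOrderIdeal lt I) {L : List γ} (hL : ∀ q ∈ L, q ∈ C) :
    IsOneStepFrom lt C I (L.foldr (rtoggle lt) I) := by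
  induction L with
  | nil => exact ⟨hI, Or.inl rfl⟩
  | cons q L ih =>
    exact isOneStepFrom_rtoggle hC hI (ih fun x hx => hL x (List.mem_cons_of_mem q hx))
      (hL q List.mem_cons_self)

theorem IsOneStepFrom.card_sdiff_union_sdiff_le_one {C : Set γ} {I J : Finset γ}
    (h : IsOneStepFrom lt C I J) : (J \ I ∪ I \ J).card ≤ 1 := by
  obtain ⟨-, rfl | ⟨p, -, hagree⟩⟩ := h
  · simp
  refine Finset.card_le_one.mpr fun a ha b hb => ?_
  have hdiff : ∀ x ∈ J \ I ∪ I \ J, x = p := fun x hx => by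
    by_contra hxp
    have := hagree x hxp
    simp only [Finset.mem_union, Finset.mem_sdiff] at hx
    tauto
  rw [hdiff a ha, hdiff b hb]

end Toggle

theorem List.drop_take_succ_eq_cons_append {α : Type*} {ω : List α} {a b : ℕ}
    (hab : a < b) (hb : b < ω.length) :
    (ω.take (b + 1)).drop a = ω[a] :: ((ω.take b).drop (a + 1) ++ [ω[b]]) := by
  rw [← List.take_concat_get' ω b hb, List.drop_append_of_le_length (by simp; omega),
    List.drop_eq_getElem_cons (by simp; omega)]
  simp

namespace Heap

variable {B : Type*} {W : Type*} [Group W] {M : CoxeterMatrix B} (cs : CoxeterSystem M W)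

theorem not_isReduced_cons_append_singleton {x : B} {m : List B}
    (h : ∀ y ∈ m, Commute (cs.simple x) (cs.simple y)) : ¬ cs.IsReduced (x :: (m ++ [x])) := by
  intro hred
  have hcomm : Commute (cs.simple x) (cs.wordProd m) :=
    Commute.list_prod_right _ _ fun _ hz => by
      obtain ⟨y, hy, rfl⟩ := List.mem_map.mp hz
      exact h y hy
  have hprod : cs.wordProd (x :: (m ++ [x])) = cs.wordProd m := by
    rw [cs.wordProd_cons, cs.wordProd_append, cs.wordProd_singleton, ← mul_assoc, hcomm.eq,
      mul_assoc, cs.simple_mul_simple_self, mul_one]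
  have hlen := cs.length_wordProd_le m
  rw [← hprod, hred.eq] at hlen
  simp at hlen

variable {cs} {ω : List B}

theorem exists_not_commute_between (hred : cs.IsReduced ω) {a b : Fin ω.length}
    (hk : ω.get a = ω.get b) (hab : a < b) :
    ∃ c, a < c ∧ c < b ∧ ¬ Commute (cs.simple (ω.get a)) (cs.simple (ω.get c)) := by
  by_contra! hcomm
  apply not_isReduced_cons_append_singleton cs (m := (ω.take b).drop (a + 1))
  · intro y hy
    obtain ⟨i, hi, rfl⟩ := List.mem_iff_getElem.mp hy
    simp only [List.length_drop, List.length_take] at hi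
    simpa using hcomm ⟨a + 1 + i, by omega⟩ (by simp [Fin.lt_def]; omega)
      (by simp [Fin.lt_def]; omega)
  · have hsub := (hred.take (b.val + 1)).drop a.val
    have hk' : ω[a.val] = ω[b.val] := hk
    rwa [List.drop_take_succ_eq_cons_append hab b.isLt, ← hk'] at hsub

theorem exists_heapLT_between (hred : cs.IsReduced ω) {a b : Fin ω.length}
    (hk : ω.get a = ω.get b) (hab : a < b) :
    ∃ c, a < c ∧ c < b ∧ heapLT cs ω b c ∧ heapLT cs ω c a := by
  obtain ⟨c, hac, hcb, hnc⟩ := exists_not_commute_between hred hk hab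
  exact ⟨c, hac, hcb, .single ⟨hcb, hk ▸ hnc⟩, .single ⟨hac, fun h => hnc h.symm⟩⟩

theorem isGappedChain_label (hred : cs.IsReduced ω) (k : B) :
    IsGappedChain (heapLT cs ω) {j | ω.get j = k} := by
  intro p q hp hq hpq
  rcases lt_or_gt_of_ne hpq with hlt | hlt
  · obtain ⟨c, hpc, hcq, hqc, hcp⟩ := exists_heapLT_between hred (hp.trans hq.symm) hlt
    exact ⟨c, hpc.ne', hcq.ne, Or.inl ⟨hqc, hcp⟩⟩
  · obtain ⟨c, hqc, hcp, hpc, hcq⟩ := exists_heapLT_between hred (hq.trans hp.symm) hlt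
    exact ⟨c, hcp.ne, hqc.ne', Or.inr ⟨hpc, hcq⟩⟩

end Heap

open Heap in
theorem toggles_of_label_class_change_at_most_one_general
    {B : Type*} {W : Type*} [Group W] {M : CoxeterMatrix B}
    (cs : CoxeterSystem M W) (ω : List B)
    (hred : cs.IsReduced ω)
    (k : B) (I : Finset (Fin ω.length)) (hI : HeapIdeal cs ω I)
    (L : List (Fin ω.length))
    (hLmem : ∀ j : Fin ω.length, j ∈ L ↔ ω.get j = k) :
    ((L.foldr (rtoggle (heapLT cs ω)) I \ I) ∪ (I \ L.foldr (rtoggle (heapLT cs ω)) I)).card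
      ≤ 1 :=
  (isOneStepFrom_foldr_rtoggle (isGappedChain_label hred k) hI
    fun j hj => (hLmem j).mp hj).card_sdiff_union_sdiff_le_one

open Heap in
/-- Applying, in any order, the toggles at all heap elements labeled by a fixed generator
`s_k` to an order ideal of the heap changes the ideal in at most one element. -/
theorem toggles_of_label_class_change_at_most_one
    {B : Type*} {W : Type*} [Group W] {M : CoxeterMatrix B}
    (cs : CoxeterSystem M W) (ω : List B)
    (hred : cs.IsReduced ω) (hfc : FullyCommutative cs (cs.wordProd ω))
    (k : B) (I : Finset (Fin ω.length)) (hI : HeapIdeal cs ω I)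
    (L : List (Fin ω.length)) (hLnd : L.Nodup)
    (hLmem : ∀ j : Fin ω.length, j ∈ L ↔ ω.get j = k) :
    ((L.foldr (rtoggle (heapLT cs ω)) I \ I) ∪ (I \ L.foldr (rtoggle (heapLT cs ω)) I)).card
      ≤ 1 :=
  toggles_of_label_class_change_at_most_one_general cs ω hred k I hI L hLmem
end

section
/- (q-Lucas theorem) Let d be a positive integer and let ζ ∈ ℂ be a primitive d-th root of unity. Let n and k be nonnegative integers, and write n = n'd + r and k = k'd + s with 0 ≤ r, s ≤ d − 1. Then the Gaussian binomial coefficient [n choose k]_q, evaluated at q = ζ, equals the ordinary binomial coefficient C(n', k') times the evaluation at q = ζ of the Gaussian binomial coefficient [r choose s]_q. -/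
/-!
Among `[1]_q, …, [n]_q` exactly `⌊n/d⌋` are divisible by `[d]_q`, namely
`[jd]_q = [d]_q · [j]_{q^d}`. Removing one factor `[d]_q` from each of them leaves a product that
does not vanish at `q = ζ`: there `[j]_{q^d}` becomes `j`, and the other factors only depend on
`m mod d`, so the cofactor of `[n]_q!` evaluates to `⌊n/d⌋! · ([d-1]_ζ!)^⌊n/d⌋ · [n mod d]_ζ!`.
Cancelling the powers of `[d]_q` in `[n choose k]_q · [k]_q! · [n-k]_q! = [n]_q!` leaves one
factor `[d]_q`, which vanishes at `ζ`, exactly when adding `k` and `n - k` carries modulo `d`,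
i.e. when `r < s`; otherwise evaluating at `ζ` and cancelling gives
`[n choose k]_ζ · [s]_ζ! · [r-s]_ζ! = C(n', k') · [r]_ζ!`.
-/

/-- The `q`-integer `[a]_q = 1 + q + ⋯ + q^(a-1)` as a polynomial in `ℤ[q]`. -/
noncomputable def qInt (a : ℕ) : Polynomial ℤ := ∑ i ∈ Finset.range a, Polynomial.X ^ i

open Polynomial Finset

lemma qInt_mul_X_sub_one (a : ℕ) : qInt a * (X - 1) = X ^ a - 1 := geom_sum_mul X a

lemma qInt_ne_zero {a : ℕ} (ha : 0 < a) : qInt a ≠ 0 := by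
  intro h
  have := congrArg (eval 1) h
  simp [qInt, eval_finsetSum] at this
  omega

lemma qInt_mul (d j : ℕ) : qInt (d * j) = qInt d * expand ℤ d (qInt j) := by
  refine mul_right_cancel₀ (X_sub_C_ne_zero (1 : ℤ)) ?_
  rw [C_1]
  calc qInt (d * j) * (X - 1) = expand ℤ d (qInt j * (X - 1)) := by
        rw [qInt_mul_X_sub_one, qInt_mul_X_sub_one, pow_mul]; simp
    _ = qInt d * expand ℤ d (qInt j) * (X - 1) := by
        rw [map_mul, map_sub, expand_X, map_one, ← qInt_mul_X_sub_one]; ring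

noncomputable def qFactorial (n : ℕ) : ℤ[X] := ∏ i ∈ range n, qInt (i + 1)

lemma qFactorial_ne_zero (n : ℕ) : qFactorial n ≠ 0 :=
  prod_ne_zero_iff.2 fun i _ => qInt_ne_zero i.succ_pos

def IsQBinomial (B : ℤ[X]) (n k : ℕ) : Prop :=
  B * ∏ i ∈ Icc 1 k, qInt i = ∏ i ∈ Icc 1 k, qInt (n + i - k)

lemma prod_Icc_one_eq_prod_range {M : Type*} [CommMonoid M] (f : ℕ → M) (k : ℕ) :
    ∏ i ∈ Icc 1 k, f i = ∏ i ∈ range k, f (i + 1) := by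
  rw [← Ico_add_one_right_eq_Icc, prod_Ico_eq_prod_range, Nat.add_sub_cancel]
  simp only [add_comm]

namespace IsQBinomial

variable {B : ℤ[X]} {n k : ℕ}

lemma eq_zero (h : IsQBinomial B n k) (hnk : n < k) : B = 0 := by
  have hzero : ∏ i ∈ Icc 1 k, qInt (n + i - k) = 0 :=
    prod_eq_zero (i := k - n) (by simp; omega) (by simp [show n + (k - n) - k = 0 by omega, qInt])
  rw [IsQBinomial, hzero, prod_Icc_one_eq_prod_range] at h
  exact (mul_eq_zero.1 h).resolve_right (qFactorial_ne_zero k)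

lemma mul_qFactorial (h : IsQBinomial B n k) (hkn : k ≤ n) :
    B * qFactorial k * qFactorial (n - k) = qFactorial n := by
  obtain ⟨m, rfl⟩ := Nat.exists_eq_add_of_le hkn
  rw [IsQBinomial, prod_Icc_one_eq_prod_range, prod_Icc_one_eq_prod_range] at h
  rw [Nat.add_sub_cancel_left, add_comm k m]
  unfold qFactorial
  rw [prod_range_add, h, mul_comm]
  refine congrArg _ (prod_congr rfl fun i _ => ?_)
  congr 1
  omega

end IsQBinomial

noncomputable def qIntCofactor (d m : ℕ) : ℤ[X] :=
  if d ∣ m then expand ℤ d (qInt (m / d)) else qInt m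

lemma qInt_eq_pow_mul_qIntCofactor (d m : ℕ) :
    qInt m = qInt d ^ (if d ∣ m then 1 else 0) * qIntCofactor d m := by
  unfold qIntCofactor
  split_ifs with h
  · obtain ⟨j, rfl⟩ := h
    rcases d.eq_zero_or_pos with rfl | hd
    · simp [qInt]
    · rw [Nat.mul_div_cancel_left j hd, pow_one, qInt_mul]
  · rw [pow_zero, one_mul]

noncomputable def qFactorialCofactor (d n : ℕ) : ℤ[X] := ∏ i ∈ range n, qIntCofactor d (i + 1)

lemma qFactorial_eq_pow_mul_qFactorialCofactor (d n : ℕ) :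
    qFactorial n = qInt d ^ (n / d) * qFactorialCofactor d n := by
  induction n with
  | zero => simp [qFactorial, qFactorialCofactor]
  | succ n ih =>
    have hf : qFactorial (n + 1) = qFactorial n * qInt (n + 1) := prod_range_succ _ _
    have hc : qFactorialCofactor d (n + 1) = qFactorialCofactor d n * qIntCofactor d (n + 1) :=
      prod_range_succ _ _
    rw [hf, hc, ih, qInt_eq_pow_mul_qIntCofactor d (n + 1), Nat.succ_div, pow_add]
    ring

lemma mul_qFactorialCofactor {d k m : ℕ} (hd : 0 < d) {B : ℤ[X]}
    (h : B * qFactorial k * qFactorial m = qFactorial (k + m)) :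
    B * qFactorialCofactor d k * qFactorialCofactor d m =
      qInt d ^ (if d ≤ k % d + m % d then 1 else 0) * qFactorialCofactor d (k + m) := by
  simp only [qFactorial_eq_pow_mul_qFactorialCofactor d, Nat.add_div hd, pow_add] at h
  refine mul_left_cancel₀ (pow_ne_zero (k / d + m / d) (qInt_ne_zero hd)) ?_
  rw [pow_add]
  linear_combination h

lemma aeval_qInt_mul_sub_one {R : Type*} [CommRing R] (ζ : R) (m : ℕ) :
    aeval ζ (qInt m) * (ζ - 1) = ζ ^ m - 1 := by
  simpa using congrArg (aeval ζ) (qInt_mul_X_sub_one m)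

namespace IsPrimitiveRoot

variable {K : Type*} [Field K] {ζ : K} {d : ℕ}

lemma aeval_qInt_ne_zero (hζ : IsPrimitiveRoot ζ d) {j : ℕ} (hj0 : 0 < j) (hjd : j < d) :
    aeval ζ (qInt j) ≠ 0 := by
  intro h
  have := aeval_qInt_mul_sub_one ζ j
  rw [h, zero_mul, eq_comm, sub_eq_zero] at this
  exact hζ.pow_ne_one_of_pos_of_lt hj0.ne' hjd this

lemma aeval_qInt_add_mul (hζ : IsPrimitiveRoot ζ d) (hd : 1 < d) (j q : ℕ) :
    aeval ζ (qInt (j + q * d)) = aeval ζ (qInt j) := by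
  refine mul_right_cancel₀ (sub_ne_zero.2 (hζ.ne_one hd)) ?_
  rw [aeval_qInt_mul_sub_one, aeval_qInt_mul_sub_one, pow_add, pow_mul', hζ.pow_eq_one, one_pow,
    mul_one]

lemma aeval_qInt_self (hζ : IsPrimitiveRoot ζ d) (hd : 1 < d) : aeval ζ (qInt d) = 0 := by
  simpa [qInt] using hζ.geom_sum_eq_zero hd

lemma aeval_qIntCofactor_mul (hζ : IsPrimitiveRoot ζ d) (hd : 0 < d) (q : ℕ) :
    aeval ζ (qIntCofactor d (q * d)) = q := by
  rw [qIntCofactor, if_pos (dvd_mul_left d q), Nat.mul_div_cancel q hd, expand_aeval, hζ.pow_eq_one]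
  simp [qInt]

lemma aeval_qIntCofactor_mul_add (hζ : IsPrimitiveRoot ζ d) {j : ℕ} (hj0 : 0 < j) (hjd : j < d)
    (q : ℕ) : aeval ζ (qIntCofactor d (q * d + j)) = aeval ζ (qInt j) := by
  have hndvd : ¬ d ∣ q * d + j := fun h =>
    absurd (Nat.le_of_dvd hj0 ((Nat.dvd_add_right (dvd_mul_left d q)).1 h)) (by omega)
  rw [qIntCofactor, if_neg hndvd, add_comm, hζ.aeval_qInt_add_mul (by omega)]

lemma aeval_qFactorial_ne_zero (hζ : IsPrimitiveRoot ζ d) {r : ℕ} (hr : r < d) :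
    aeval ζ (qFactorial r) ≠ 0 := by
  rw [qFactorial, map_prod]
  exact prod_ne_zero_iff.2 fun i hi => hζ.aeval_qInt_ne_zero i.succ_pos (by simp at hi; omega)

lemma aeval_qFactorialCofactor_mul_add_eq_mul (hζ : IsPrimitiveRoot ζ d) {r : ℕ} (hr : r < d)
    (q : ℕ) : aeval ζ (qFactorialCofactor d (q * d + r)) =
      aeval ζ (qFactorialCofactor d (q * d)) * aeval ζ (qFactorial r) := by
  rw [qFactorialCofactor, prod_range_add, ← qFactorialCofactor, map_mul, qFactorial, map_prod,
    map_prod]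
  refine congrArg _ (prod_congr rfl fun i hi => ?_)
  rw [add_assoc, hζ.aeval_qIntCofactor_mul_add i.succ_pos (by simp at hi; omega)]

lemma aeval_qFactorialCofactor (hζ : IsPrimitiveRoot ζ d) {r : ℕ} (hr : r < d) (q : ℕ) :
    aeval ζ (qFactorialCofactor d (q * d + r)) =
      q.factorial * aeval ζ (qFactorial (d - 1)) ^ q * aeval ζ (qFactorial r) := by
  rw [hζ.aeval_qFactorialCofactor_mul_add_eq_mul hr]
  congr 1
  induction q with
  | zero => simp [qFactorialCofactor]
  | succ q ih =>
    have hsplit : (q + 1) * d = q * d + (d - 1) + 1 := by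
      rw [add_mul, one_mul]; omega
    rw [hsplit, qFactorialCofactor, prod_range_succ, ← qFactorialCofactor, map_mul,
      hζ.aeval_qFactorialCofactor_mul_add_eq_mul (by omega), ih, ← hsplit,
      hζ.aeval_qIntCofactor_mul (by omega), Nat.factorial_succ]
    push_cast
    ring

variable [CharZero K]

lemma aeval_mul_qFactorial_eq_choose (hζ : IsPrimitiveRoot ζ d) {B : ℤ[X]} {a b s t : ℕ}
    (hst : s + t < d)
    (h : B * qFactorial (a * d + s) * qFactorial (b * d + t) =
      qFactorial (a * d + s + (b * d + t))) :
    aeval ζ B * aeval ζ (qFactorial s) * aeval ζ (qFactorial t) =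
      (a + b).choose a * aeval ζ (qFactorial (s + t)) := by
  have key := congrArg (aeval ζ) (mul_qFactorialCofactor (d := d) (by omega) h)
  rw [Nat.mul_add_mod_of_lt (by omega), Nat.mul_add_mod_of_lt (by omega), if_neg (by omega),
    pow_zero, one_mul, show a * d + s + (b * d + t) = (a + b) * d + (s + t) by ring] at key
  simp only [map_mul, hζ.aeval_qFactorialCofactor (by omega : s < d),
    hζ.aeval_qFactorialCofactor (by omega : t < d), hζ.aeval_qFactorialCofactor hst] at key
  have hchoose : ((a + b).choose a * a.factorial * b.factorial : K) = (a + b).factorial := by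
    rw [add_comm a b, ← Nat.add_choose_mul_factorial_mul_factorial b a]
    push_cast
    ring
  have hF := hζ.aeval_qFactorial_ne_zero (by omega : d - 1 < d)
  refine mul_right_cancel₀ (mul_ne_zero (mul_ne_zero (Nat.cast_ne_zero.2 a.factorial_ne_zero)
    (Nat.cast_ne_zero.2 b.factorial_ne_zero)) (pow_ne_zero (a + b) hF)) ?_
  rw [pow_add] at key ⊢
  linear_combination key - aeval ζ (qFactorial (s + t)) * aeval ζ (qFactorial (d - 1)) ^ a *
    aeval ζ (qFactorial (d - 1)) ^ b * hchoose

lemma aeval_eq_zero_of_mul_qFactorial_eq (hζ : IsPrimitiveRoot ζ d) {B : ℤ[X]} {a b s t : ℕ}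
    (hs : s < d) (ht : t < d) (hst : d ≤ s + t)
    (h : B * qFactorial (a * d + s) * qFactorial (b * d + t) =
      qFactorial (a * d + s + (b * d + t))) :
    aeval ζ B = 0 := by
  have key := congrArg (aeval ζ) (mul_qFactorialCofactor (d := d) (by omega) h)
  rw [Nat.mul_add_mod_of_lt hs, Nat.mul_add_mod_of_lt ht, if_pos hst, pow_one, map_mul, map_mul,
    map_mul, hζ.aeval_qInt_self (by omega), zero_mul, hζ.aeval_qFactorialCofactor hs,
    hζ.aeval_qFactorialCofactor ht] at key
  have hF := hζ.aeval_qFactorial_ne_zero (by omega : d - 1 < d)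
  simpa [Nat.factorial_ne_zero, hF, hζ.aeval_qFactorial_ne_zero hs,
    hζ.aeval_qFactorial_ne_zero ht] using key

end IsPrimitiveRoot

namespace IsQBinomial

variable {K : Type*} [Field K] [CharZero K] {ζ : K} {d : ℕ} {B : ℤ[X]} {n' k' r s : ℕ}

lemma aeval_mul_eq_choose_mul (hζ : IsPrimitiveRoot ζ d)
    (h : IsQBinomial B (n' * d + r) (k' * d + s)) (hsr : s ≤ r) (hr : r < d) :
    aeval ζ B * aeval ζ (qFactorial s) * aeval ζ (qFactorial (r - s)) =
      n'.choose k' * aeval ζ (qFactorial r) := by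
  rcases lt_or_ge (n' * d + r) (k' * d + s) with hlt | hle
  · have hn'k' : n' < k' := by
      by_contra! hk'n'
      have := Nat.mul_le_mul_right d hk'n'
      omega
    simp [h.eq_zero hlt, Nat.choose_eq_zero_of_lt hn'k']
  · have hk'n' : k' ≤ n' := by
      by_contra! hn'k'
      have : (n' + 1) * d ≤ k' * d := Nat.mul_le_mul_right d hn'k'
      rw [add_mul, one_mul] at this
      omega
    have hdiff : (n' - k') * d + k' * d = n' * d := by rw [← add_mul, Nat.sub_add_cancel hk'n']
    have hmul := h.mul_qFactorial hle
    rw [show n' * d + r - (k' * d + s) = (n' - k') * d + (r - s) by omega,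
      show n' * d + r = k' * d + s + ((n' - k') * d + (r - s)) by omega] at hmul
    have := hζ.aeval_mul_qFactorial_eq_choose (by omega) hmul
    rwa [Nat.add_sub_cancel' hk'n', Nat.add_sub_cancel' hsr] at this

lemma aeval_eq_zero (hζ : IsPrimitiveRoot ζ d) (h : IsQBinomial B (n' * d + r) (k' * d + s))
    (hrs : r < s) (hs : s < d) : aeval ζ B = 0 := by
  rcases lt_or_ge (n' * d + r) (k' * d + s) with hlt | hle
  · rw [h.eq_zero hlt, map_zero]
  · have hk'n' : k' < n' := by
      by_contra! hn'k'
      have := Nat.mul_le_mul_right d hn'k'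
      omega
    have hdiff : (n' - k' - 1) * d + (k' + 1) * d = n' * d := by
      rw [← add_mul]
      congr 1
      omega
    rw [add_mul, one_mul] at hdiff
    have hmul := h.mul_qFactorial hle
    rw [show n' * d + r - (k' * d + s) = (n' - k' - 1) * d + (d + r - s) by omega,
      show n' * d + r = k' * d + s + ((n' - k' - 1) * d + (d + r - s)) by omega] at hmul
    exact hζ.aeval_eq_zero_of_mul_qFactorial_eq hs (by omega) (by omega) hmul

end IsQBinomial

/-- The `q`-Lucas theorem: if `ζ` is a primitive `d`-th root of unity,
`n = n'd + r` and `k = k'd + s` with `0 ≤ r, s ≤ d − 1`, then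
`[n choose k]_{q=ζ} = C(n', k') · [r choose s]_{q=ζ}`.  The Gaussian binomial
coefficients are characterized by `[n choose k]_q · ∏_{i=1}^k [i]_q = ∏_{i=1}^k [n−k+i]_q`. -/
theorem q_lucas (d : ℕ) (hd : 0 < d) (ζ : ℂ) (hζ : IsPrimitiveRoot ζ d)
    (n k n' k' r s : ℕ) (hn : n = n' * d + r) (hk : k = k' * d + s)
    (hr : r ≤ d - 1) (hs : s ≤ d - 1)
    (Bnk Brs : Polynomial ℤ)
    (hBnk : Bnk * ∏ i ∈ Finset.Icc 1 k, qInt i = ∏ i ∈ Finset.Icc 1 k, qInt (n + i - k))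
    (hBrs : Brs * ∏ i ∈ Finset.Icc 1 s, qInt i = ∏ i ∈ Finset.Icc 1 s, qInt (r + i - s)) :
    Polynomial.aeval ζ Bnk = (n'.choose k' : ℂ) * Polynomial.aeval ζ Brs := by
  subst hn hk
  have hrd : r < d := by omega
  have hsd : s < d := by omega
  rcases le_or_gt s r with hsr | hrs
  · have hBrs' := congrArg (aeval ζ) (IsQBinomial.mul_qFactorial hBrs hsr)
    rw [map_mul, map_mul] at hBrs'
    refine mul_right_cancel₀ (mul_ne_zero (hζ.aeval_qFactorial_ne_zero hsd)
      (hζ.aeval_qFactorial_ne_zero (by omega : r - s < d))) ?_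
    rw [← mul_assoc, IsQBinomial.aeval_mul_eq_choose_mul hζ hBnk hsr hrd, ← hBrs']
    ring
  · rw [IsQBinomial.aeval_eq_zero hζ hBnk hrs hsd, IsQBinomial.eq_zero hBrs hrs, map_zero,
      mul_zero]
end
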